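/- Let α < 0. For every finitely supported real sequence (u_n)_{n≥0} with u_0 = u_1 = 0, we have ∑_{n≥2} (n−1)^α (u_n − u_{n-1})² ≥ ((α−1)²/4) ∑_{n≥2} n^{α−2} u_n². -/

import Mathlib

/-!
Ground state substitution. Put `β = (1 - α) / 2 > 1 / 2`, `φ m = m ^ β`, `a k = (k + 1) ^ α`
and `c k = a k * (φ (k + 2) - φ (k + 1))`. The inequality
`(φ - ψ) (u² / φ - v² / ψ) ≤ (u - v)²` and a summation by parts give
`∑ a k (∇u)² ≥ ∑ (c k - c (k + 1)) u (k + 2)² / φ (k + 2)`, so it suffices that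
`c k - c (k + 1) ≥ β² (k + 2) ^ (-β - 1)`, a discrete form of
`-(x ^ α (x ^ β)')' = β² x ^ (-β - 1)`.

As `c k = flux β (k + 1)`, that difference is the integral of `-flux'` over `[k + 1, k + 2]`; the
bound follows from `-flux' y ≥ β² (y + 1/2) ^ (-β - 1)` and the convexity of
`y ↦ (y + 1/2) ^ (-β - 1)` (its tangent at the midpoint of the interval). After the substitution
`t = 1 / y` the pointwise bound becomes an inequality on `t ∈ [0, 1]` with equality at `t = 0`;
comparing derivatives reduces it to Bernoulli's inequality and a polynomial inequality.
-/

open Real Finset Set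

lemma one_sub_mul_le_one_add_rpow_neg {q s : ℝ} (hq : 1 ≤ q) (hs : -1 < s) :
    1 - q * s ≤ (1 + s) ^ (-q) := by
  have hpos : 0 < 1 + s := by linarith
  -- Bernoulli's inequality for the exponent `q ≥ 1`, applied at `1 + s' = (1 + s)⁻¹`.
  set s' := -s / (1 + s) with hs'
  have hs'_ge : -1 ≤ s' := by rw [hs', le_div_iff₀ hpos]; linarith
  have hinv : 1 + s' = (1 + s)⁻¹ := by rw [hs']; field_simp; ring
  have hsum : s' + s = s ^ 2 / (1 + s) := by rw [hs']; field_simp; ring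
  have hbern := one_add_mul_self_le_rpow_one_add hs'_ge hq
  rw [hinv, inv_rpow hpos.le, ← rpow_neg hpos.le] at hbern
  have : 0 ≤ q * (s' + s) := by rw [hsum]; exact mul_nonneg (by linarith) (by positivity)
  linarith

lemma rpow_neg_tangent_le {q y c : ℝ} (hq : 1 ≤ q) (hy : 0 < y) (hc : 0 < c) :
    c ^ (-q) - q * c ^ (-q - 1) * (y - c) ≤ y ^ (-q) := by
  have hbern := one_sub_mul_le_one_add_rpow_neg hq (s := y / c - 1) (by
    have := div_pos hy hc; linarith)
  rw [add_sub_cancel, div_rpow hy.le hc.le, le_div_iff₀ (rpow_pos_of_pos hc _)] at hbern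
  have hc1 : c ^ (-q - 1) = c ^ (-q) / c := by rw [rpow_sub_one hc.ne']
  calc c ^ (-q) - q * c ^ (-q - 1) * (y - c) = (1 - q * (y / c - 1)) * c ^ (-q) := by
        rw [hc1]; field_simp
    _ ≤ y ^ (-q) := hbern

lemma sub_le_sub_of_hasDerivAt_le {f g f' g' : ℝ → ℝ} {a b : ℝ} (hab : a ≤ b)
    (hf : ∀ x ∈ Icc a b, HasDerivAt f (f' x) x) (hg : ∀ x ∈ Icc a b, HasDerivAt g (g' x) x)
    (hle : ∀ x ∈ Ioo a b, g' x ≤ f' x) : g b - g a ≤ f b - f a := by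
  have hd : ∀ x ∈ Icc a b, HasDerivAt (f - g) (f' x - g' x) x := fun x hx => (hf x hx).sub (hg x hx)
  have hmono : MonotoneOn (f - g) (Icc a b) := by
    refine monotoneOn_of_deriv_nonneg (convex_Icc a b)
      (fun x hx => (hd x hx).continuousAt.continuousWithinAt) ?_ ?_
    · rw [interior_Icc]
      exact fun x hx => (hd x (Ioo_subset_Icc_self hx)).differentiableAt.differentiableWithinAt
    · rw [interior_Icc]
      intro x hx
      rw [(hd x (Ioo_subset_Icc_self hx)).deriv, sub_nonneg]
      exact hle x hx
  have := hmono (left_mem_Icc.2 hab) (right_mem_Icc.2 hab) hab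
  simp only [Pi.sub_apply] at this
  linarith

lemma sum_range_mul_sub {R : Type*} [CommRing R] (c w : ℕ → R) (M : ℕ) :
    ∑ n ∈ range M, c n * (w (n + 2) - w (n + 1)) =
      ∑ n ∈ range M, (c n - c (n + 1)) * w (n + 2) + c M * w (M + 1) - c 0 * w 1 := by
  induction M with
  | zero => simp
  | succ M ih => rw [sum_range_succ, sum_range_succ, ih]; ring

lemma sub_mul_div_sub_div_le_sq {φ ψ : ℝ} (hφ : 0 < φ) (hψ : 0 < ψ) (u v : ℝ) :
    (φ - ψ) * (u ^ 2 / φ - v ^ 2 / ψ) ≤ (u - v) ^ 2 := by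
  have key : (u - v) ^ 2 - (φ - ψ) * (u ^ 2 / φ - v ^ 2 / ψ) = (ψ * u - φ * v) ^ 2 / (φ * ψ) := by
    field_simp; ring
  have : 0 ≤ (ψ * u - φ * v) ^ 2 / (φ * ψ) := by positivity
  linarith

lemma one_add_div_rpow {x a : ℝ} (hx : 0 < x) (ha : 0 ≤ x + a) (p : ℝ) :
    (1 + a / x) ^ p = (x + a) ^ p * x ^ (-p) := by
  rw [show 1 + a / x = (x + a) / x by field_simp, div_rpow ha hx.le, rpow_neg hx.le,
    div_eq_mul_inv]

lemma sum_mul_sub_sq_div_le_sum_mul_sq {a φ u : ℕ → ℝ} (ha : ∀ n, 0 ≤ a n)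
    (hφ : ∀ n, 0 < φ (n + 1)) {N : ℕ} (h1 : u 1 = 0) (hN : u (N + 1) = 0) :
    ∑ n ∈ range N, (a n * (φ (n + 2) - φ (n + 1)) - a (n + 1) * (φ (n + 3) - φ (n + 2))) *
        (u (n + 2) ^ 2 / φ (n + 2)) ≤
      ∑ n ∈ range N, a n * (u (n + 2) - u (n + 1)) ^ 2 := by
  set c : ℕ → ℝ := fun n => a n * (φ (n + 2) - φ (n + 1))
  set w : ℕ → ℝ := fun m => u m ^ 2 / φ m
  have hparts := sum_range_mul_sub c w N
  have hw1 : w 1 = 0 := by simp [w, h1]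
  have hwN : w (N + 1) = 0 := by simp [w, hN]
  rw [hw1, hwN, mul_zero, mul_zero, add_zero, sub_zero] at hparts
  calc ∑ n ∈ range N, (c n - c (n + 1)) * w (n + 2)
      = ∑ n ∈ range N, c n * (w (n + 2) - w (n + 1)) := hparts.symm
    _ ≤ _ := sum_le_sum fun n _ => by
        simpa only [c, w, mul_assoc] using
          mul_le_mul_of_nonneg_left (sub_mul_div_sub_div_le_sq (hφ (n + 1)) (hφ n) _ _) (ha n)

namespace HardyShifted

variable {β t : ℝ}

lemma cleared_deriv_comparison_of_one_le (hβ : 1 ≤ β) (ht : 0 ≤ t) :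
    β * (1 - β * t / 2) * (1 + t) ^ 2 ≤
      ((1 + t) * (1 + t / 2)) ^ β * ((1 + t / 2) ^ 2 * (β + (2 * β - 1) * t)) := by
  have hbern : 1 + β * (t * (3 + t) / 2) ≤ ((1 + t) * (1 + t / 2)) ^ β := by
    convert one_add_mul_self_le_rpow_one_add (by nlinarith : (-1 : ℝ) ≤ t * (3 + t) / 2) hβ
      using 2
    ring
  have hpoly : β * (1 - β * t / 2) * (1 + t) ^ 2 ≤
      (1 + β * (t * (3 + t) / 2)) * ((1 + t / 2) ^ 2 * (β + (2 * β - 1) * t)) := by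
    have hb : 0 ≤ β - 1 := by linarith
    nlinarith [mul_nonneg ht hb, mul_nonneg (mul_nonneg ht ht) hb,
      mul_nonneg (mul_nonneg (mul_nonneg ht ht) ht) hb, mul_nonneg (mul_nonneg ht ht) ht,
      mul_nonneg ht (mul_nonneg ht (mul_nonneg ht ht)), mul_nonneg (mul_nonneg ht hb) hb]
  have : 0 ≤ β + (2 * β - 1) * t := by nlinarith
  exact hpoly.trans (mul_le_mul_of_nonneg_right hbern (by positivity))

lemma cleared_deriv_comparison_poly_of_lt_one (hβ : 1 / 2 < β) (hβ1 : β < 1) (ht : 0 ≤ t) :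
    β * (1 - β * t / 2) * (1 + t) ^ 2 * (1 + (1 - β) * (t * (3 + t) / 2)) ≤
      ((1 + t) * (1 + t / 2)) * ((1 + t / 2) ^ 2 * (β + (2 * β - 1) * t)) := by
  -- the difference of the two sides is `∑ qᵢ tⁱ⁺¹` with the coefficients `qᵢ` below
  have he : 0 ≤ 2 * β - 1 := by linarith
  have hd : 0 ≤ 1 - β := by linarith
  have hq0 : 0 ≤ -1 + β + 2 * β ^ 2 := by nlinarith
  have hq1 : 0 ≤ -5/2 + 11/4 * β + 21/4 * β ^ 2 - 3/4 * β ^ 3 := by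
    nlinarith [mul_nonneg he hd, mul_nonneg (mul_nonneg hd hd) hd]
  have hq2 : 0 ≤ -9/4 + 23/8 * β + 19/4 * β ^ 2 - 7/4 * β ^ 3 := by
    nlinarith [mul_nonneg he hd, mul_nonneg (mul_nonneg hd hd) hd, mul_nonneg (mul_nonneg he hd) hd]
  have hq3 : 0 ≤ -7/8 + 11/8 * β + 7/4 * β ^ 2 - 5/4 * β ^ 3 := by
    nlinarith [mul_nonneg he hd, mul_nonneg (mul_nonneg hd hd) hd, mul_nonneg (mul_nonneg he hd) hd]
  have hq4 : 0 ≤ -1/8 + 1/4 * β + 1/4 * β ^ 2 - 1/4 * β ^ 3 := by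
    nlinarith [mul_nonneg he hd, mul_nonneg (mul_nonneg hd hd) hd, mul_nonneg (mul_nonneg he hd) hd]
  nlinarith [mul_nonneg hq0 ht, mul_nonneg hq1 (pow_nonneg ht 2), mul_nonneg hq2 (pow_nonneg ht 3),
    mul_nonneg hq3 (pow_nonneg ht 4), mul_nonneg hq4 (pow_nonneg ht 5)]

lemma cleared_deriv_comparison_of_lt_one (hβ : 1 / 2 < β) (hβ1 : β < 1) (ht : 0 ≤ t) (ht1 : t ≤ 1) :
    β * (1 - β * t / 2) * (1 + t) ^ 2 ≤
      ((1 + t) * (1 + t / 2)) ^ β * ((1 + t / 2) ^ 2 * (β + (2 * β - 1) * t)) := by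
  set P := (1 + t) * (1 + t / 2)
  have hPpos : 0 < P := by positivity
  have hbern : P ^ (1 - β) ≤ 1 + (1 - β) * (t * (3 + t) / 2) := by
    convert rpow_one_add_le_one_add_mul_self (by nlinarith : (-1 : ℝ) ≤ t * (3 + t) / 2)
      (by linarith : 0 ≤ 1 - β) (by linarith) using 2
    ring
  have hsplit : P = P ^ β * P ^ (1 - β) := by rw [← rpow_add hPpos]; simp
  have hLHS : 0 ≤ β * (1 - β * t / 2) * (1 + t) ^ 2 := by
    have : 0 ≤ 1 - β * t / 2 := by nlinarith
    have : 0 ≤ β := by linarith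
    positivity
  refine le_of_mul_le_mul_right ?_ (rpow_pos_of_pos hPpos (1 - β))
  calc β * (1 - β * t / 2) * (1 + t) ^ 2 * P ^ (1 - β)
      ≤ β * (1 - β * t / 2) * (1 + t) ^ 2 * (1 + (1 - β) * (t * (3 + t) / 2)) :=
        mul_le_mul_of_nonneg_left hbern hLHS
    _ ≤ P * ((1 + t / 2) ^ 2 * (β + (2 * β - 1) * t)) :=
        cleared_deriv_comparison_poly_of_lt_one hβ hβ1 ht
    _ = _ := by nth_rewrite 1 [hsplit]; ring

lemma deriv_comparison (hβ : 1 / 2 < β) (ht : 0 ≤ t) (ht1 : t ≤ 1) :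
    β ^ 2 * ((1 + t / 2) ^ (-β - 2) * (1 - β * t / 2)) ≤
      β * ((1 + t) ^ (β - 2) * (β + (2 * β - 1) * t)) := by
  have hA : 0 < 1 + t := by linarith
  have hB : 0 < 1 + t / 2 := by linarith
  have hcore : β * (1 - β * t / 2) * (1 + t) ^ 2 ≤
      ((1 + t) * (1 + t / 2)) ^ β * ((1 + t / 2) ^ 2 * (β + (2 * β - 1) * t)) := by
    rcases le_or_gt 1 β with hβ1 | hβ1
    · exact cleared_deriv_comparison_of_one_le hβ1 ht
    · exact cleared_deriv_comparison_of_lt_one hβ hβ1 ht ht1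
  have hA' : (1 + t) ^ β = (1 + t) ^ (β - 2) * (1 + t) ^ 2 := by
    rw [← rpow_natCast, ← rpow_add hA]; norm_num
  have hB' : (1 + t / 2) ^ β * (1 + t / 2) ^ 2 = ((1 + t / 2) ^ (-β - 2))⁻¹ := by
    rw [← rpow_natCast, ← rpow_add hB, ← rpow_neg hB.le]; norm_num; ring_nf
  set X := (1 + t / 2) ^ (-β - 2)
  have hX : 0 < X := rpow_pos_of_pos hB _
  have hL : β * (1 - β * t / 2) ≤ (1 + t) ^ (β - 2) * (β + (2 * β - 1) * t) * X⁻¹ := by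
    refine le_of_mul_le_mul_right ?_ (by positivity : (0 : ℝ) < (1 + t) ^ 2)
    rw [mul_rpow hA.le hB.le, hA'] at hcore
    rw [← hB']
    linarith
  calc β ^ 2 * (X * (1 - β * t / 2)) = β * X * (β * (1 - β * t / 2)) := by ring
    _ ≤ β * X * ((1 + t) ^ (β - 2) * (β + (2 * β - 1) * t) * X⁻¹) :=
        mul_le_mul_of_nonneg_left hL (by nlinarith)
    _ = β * ((1 + t) ^ (β - 2) * (β + (2 * β - 1) * t)) := by field_simp

lemma integrated_comparison (hβ : 1 / 2 < β) (ht : 0 ≤ t) (ht1 : t ≤ 1) :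
    β ^ 2 * t * (1 + t / 2) ^ (-β - 1) ≤
      (1 - β) + (2 * β - 1) * (1 + t) ^ β - β * (1 + t) ^ (β - 1) := by
  have hf : ∀ s ∈ Icc 0 t, HasDerivAt
      (fun s => (1 - β) + (2 * β - 1) * (1 + s) ^ β - β * (1 + s) ^ (β - 1))
      (β * ((1 + s) ^ (β - 2) * (β + (2 * β - 1) * s))) s := by
    intro s hs
    have hA : 0 < 1 + s := by linarith [hs.1]
    have d := ((hasDerivAt_id s).const_add 1).rpow_const (p := β) (Or.inl hA.ne')
    have d' := ((hasDerivAt_id s).const_add 1).rpow_const (p := β - 1) (Or.inl hA.ne')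
    refine (((d.const_mul (2 * β - 1)).const_add (1 - β)).sub (d'.const_mul β)).congr_deriv ?_
    simp only [id]
    rw [show β - 1 - 1 = β - 2 by ring, show β - 1 = β - 2 + 1 by ring, rpow_add_one hA.ne']
    ring
  have hg : ∀ s ∈ Icc 0 t, HasDerivAt (fun s => β ^ 2 * s * (1 + s / 2) ^ (-β - 1))
      (β ^ 2 * ((1 + s / 2) ^ (-β - 2) * (1 - β * s / 2))) s := by
    intro s hs
    have hB : 0 < 1 + s / 2 := by linarith [hs.1]
    have d := (((hasDerivAt_id s).div_const 2).const_add 1).rpow_const (p := -β - 1)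
      (Or.inl hB.ne')
    refine (((hasDerivAt_id s).const_mul (β ^ 2)).mul d).congr_deriv ?_
    simp only [id]
    rw [show -β - 1 - 1 = -β - 2 by ring, show -β - 1 = -β - 2 + 1 by ring, rpow_add_one hB.ne']
    ring
  have := sub_le_sub_of_hasDerivAt_le ht hf hg fun s hs =>
    deriv_comparison hβ hs.1.le (hs.2.le.trans ht1)
  norm_num at this
  linarith

lemma sq_mul_rpow_le_neg_deriv_flux (hβ : 1 / 2 < β) {x : ℝ} (hx : 1 ≤ x) :
    β ^ 2 * (x + 1 / 2) ^ (-β - 1) ≤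
      (1 - β) * x ^ (-β) + (2 * β - 1) * (x ^ (-(2 * β)) * (x + 1) ^ β)
        - β * (x ^ (1 - 2 * β) * (x + 1) ^ (β - 1)) := by
  have hx0 : 0 < x := by linarith
  have hcmp := integrated_comparison hβ (t := 1 / x) (by positivity)
    ((div_le_one hx0).2 hx)
  rw [show 1 / x / 2 = (1 / 2) / x by ring, one_add_div_rpow hx0 (by linarith),
    one_add_div_rpow hx0 (by linarith), one_add_div_rpow hx0 (by linarith)] at hcmp
  have hxβ : 0 < x ^ (-β) := rpow_pos_of_pos hx0 _
  have e1 : x ^ (-(2 * β)) = x ^ (-β) * x ^ (-β) := by rw [← rpow_add hx0]; ring_nf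
  have e2 : x ^ (1 - 2 * β) = x ^ (-β) * x ^ (-(β - 1)) := by rw [← rpow_add hx0]; ring_nf
  have e3 : x ^ (-β) * x ^ (-(-β - 1)) = x := by rw [← rpow_add hx0]; ring_nf; simp
  rw [e1, e2]
  calc β ^ 2 * (x + 1 / 2) ^ (-β - 1)
      = x ^ (-β) * (β ^ 2 * (1 / x) * ((x + 1 / 2) ^ (-β - 1) * x ^ (-(-β - 1)))) := by
        rw [show ∀ a b c d : ℝ, a * (β ^ 2 * b * (c * d)) = β ^ 2 * c * b * (a * d) by
          intros; ring, e3]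
        field_simp
    _ ≤ x ^ (-β) * ((1 - β) + (2 * β - 1) * ((x + 1) ^ β * x ^ (-β))
          - β * ((x + 1) ^ (β - 1) * x ^ (-(β - 1)))) := mul_le_mul_of_nonneg_left hcmp hxβ.le
    _ = _ := by ring

/-- `flux β (k + 1) = (k + 1) ^ (1 - 2β) ((k + 2) ^ β - (k + 1) ^ β)` is the coefficient `c k`
of the summation by parts for the weight `(k + 1) ^ α` and the ground state `m ^ β`,
where `α = 1 - 2β`. -/
noncomputable def flux (β y : ℝ) : ℝ := y ^ (1 - 2 * β) * (y + 1) ^ β - y ^ (1 - β)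

lemma hasDerivAt_flux {x : ℝ} (hx : 0 < x) :
    HasDerivAt (flux β) ((1 - 2 * β) * x ^ (-(2 * β)) * (x + 1) ^ β
      + β * (x ^ (1 - 2 * β) * (x + 1) ^ (β - 1)) - (1 - β) * x ^ (-β)) x := by
  have d1 := Real.hasDerivAt_rpow_const (p := 1 - 2 * β) (Or.inl hx.ne')
  have d2 := ((hasDerivAt_id x).add_const 1).rpow_const (p := β) (Or.inl (by simp; linarith))
  have d3 := Real.hasDerivAt_rpow_const (p := 1 - β) (Or.inl hx.ne')
  refine ((d1.mul d2).sub d3).congr_deriv ?_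
  simp only [id]
  rw [show 1 - 2 * β - 1 = -(2 * β) by ring, show 1 - β - 1 = -β by ring]
  ring

lemma sq_mul_rpow_le_flux_sub (hβ : 1 / 2 < β) {c : ℝ} (hc : 2 ≤ c) :
    β ^ 2 * c ^ (-β - 1) ≤ flux β (c - 1) - flux β c := by
  have hc0 : 0 < c := by linarith
  set q := β + 1
  -- an antiderivative of `β²` times the tangent line of `y ↦ (y + 1/2)^(-q)` at `y = c - 1/2`
  set g : ℝ → ℝ := fun y => β ^ 2 * (c ^ (-q) * y - q * c ^ (-q - 1) * (y + 1 / 2 - c) ^ 2 / 2)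
  have hg : ∀ y ∈ Icc (c - 1) c,
      HasDerivAt g (β ^ 2 * (c ^ (-q) - q * c ^ (-q - 1) * (y + 1 / 2 - c))) y := by
    intro y _
    refine ((((hasDerivAt_id y).const_mul _).sub
      ((((hasDerivAt_id y).add_const _).sub_const c).pow 2 |>.const_mul _ |>.div_const 2)).const_mul
        _).congr_deriv ?_
    simp only [id]
    ring
  have hf : ∀ y ∈ Icc (c - 1) c, HasDerivAt (fun y => -flux β y) _ y := fun y hy =>
    (hasDerivAt_flux (β := β) (by linarith [hy.1])).neg
  have := sub_le_sub_of_hasDerivAt_le (by linarith) hf hg fun y hy => by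
    have hy1 : 1 ≤ y := by linarith [hy.1]
    have htan := rpow_neg_tangent_le (q := q) (by linarith) (by linarith : 0 < y + 1 / 2) hc0
    have hlb := sq_mul_rpow_le_neg_deriv_flux hβ hy1
    rw [show -q = -β - 1 by ring] at htan ⊢
    nlinarith [mul_le_mul_of_nonneg_left htan (sq_nonneg β)]
  simp only [g] at this
  rw [show -q = -β - 1 by ring] at this
  nlinarith

theorem hardy_finite {α : ℝ} (hα : α < 0) {u : ℕ → ℝ} {N : ℕ} (h1 : u 1 = 0)
    (hN : u (N + 1) = 0) :
    (α - 1) ^ 2 / 4 * ∑ n ∈ range N, ((n : ℝ) + 2) ^ (α - 2) * u (n + 2) ^ 2 ≤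
      ∑ n ∈ range N, ((n : ℝ) + 1) ^ α * (u (n + 2) - u (n + 1)) ^ 2 := by
  set β := (1 - α) / 2 with hβ_def
  have hβ : 1 / 2 < β := by linarith
  have hα_eq : α = 1 - 2 * β := by ring
  have hcoef : ∀ y : ℝ, 0 < y → y ^ α * ((y + 1) ^ β - y ^ β) = flux β y := by
    intro y hy
    rw [flux, mul_sub, ← rpow_add hy, hα_eq]
    ring_nf
  have hground := sum_mul_sub_sq_div_le_sum_mul_sq (a := fun n => ((n : ℝ) + 1) ^ α)
    (φ := fun m => (m : ℝ) ^ β) (fun n => by positivity) (fun n => by positivity) h1 hN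
  push_cast at hground
  refine le_trans ?_ hground
  rw [mul_sum]
  refine sum_le_sum fun n _ => ?_
  have hn : (0 : ℝ) < n + 2 := by positivity
  have hkey := sq_mul_rpow_le_flux_sub hβ (c := (n : ℝ) + 2) (by linarith [n.cast_nonneg (α := ℝ)])
  rw [show (n : ℝ) + 2 - 1 = (n : ℝ) + 1 by ring] at hkey
  calc (α - 1) ^ 2 / 4 * (((n : ℝ) + 2) ^ (α - 2) * u (n + 2) ^ 2)
      = β ^ 2 * ((n : ℝ) + 2) ^ (-β - 1) * (u (n + 2) ^ 2 / ((n : ℝ) + 2) ^ β) := by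
        have hexp : ((n : ℝ) + 2) ^ (α - 2) = ((n : ℝ) + 2) ^ (-β - 1) / ((n : ℝ) + 2) ^ β := by
          rw [← rpow_sub hn, hα_eq]; ring_nf
        rw [hexp, hα_eq]
        ring
    _ ≤ (flux β ((n : ℝ) + 1) - flux β ((n : ℝ) + 2)) * (u (n + 2) ^ 2 / ((n : ℝ) + 2) ^ β) :=
        mul_le_mul_of_nonneg_right hkey (by positivity)
    _ = _ := by
        rw [← hcoef _ (by positivity), ← hcoef _ hn]
        ring_nf

end HardyShifted

theorem hardy_shifted_neg' (α : ℝ) (hα : α < 0) (u : ℕ → ℝ)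
    (hfin : ∃ N, ∀ n ≥ N, u n = 0) (h1 : u 1 = 0) :
    ∑' n : ℕ, ((n : ℝ) + 1) ^ α * (u (n + 2) - u (n + 1)) ^ 2 ≥
      ((α - 1) ^ 2 / 4) * ∑' n : ℕ, ((n : ℝ) + 2) ^ (α - 2) * (u (n + 2)) ^ 2 := by
  obtain ⟨N, hN⟩ := hfin
  have hgrad : ∀ n ∉ range N, ((n : ℝ) + 1) ^ α * (u (n + 2) - u (n + 1)) ^ 2 = 0 := by
    intro n hn
    rw [Finset.mem_range, not_lt] at hn
    rw [hN (n + 2) (by omega), hN (n + 1) (by omega)]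
    ring
  have hval : ∀ n ∉ range N, ((n : ℝ) + 2) ^ (α - 2) * u (n + 2) ^ 2 = 0 := by
    intro n hn
    rw [Finset.mem_range, not_lt] at hn
    rw [hN (n + 2) (by omega)]
    ring
  rw [tsum_eq_sum hgrad, tsum_eq_sum hval]
  exact HardyShifted.hardy_finite hα h1 (hN (N + 1) (by omega))
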